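/- arXiv:2307.10108 — 5 statements merged into one kernel-verified Lean document; each statement's English description precedes it below -/
import Mathlib

section
/- Let (ℕ, E) be a self-similar graph satisfying assumption (A): for every edge e ∈ E¹ there exists m ∈ ℕ with m|_e ≠ 0. Then for every edge e, the sequence n ↦ n|_e tends to infinity as n → ∞. -/
/-- Let `(ℕ, E)` be a self-similar graph satisfying assumption (A): for every
edge `e` there exists `m ∈ ℕ` with `m|_e ≠ 0`.  Then for every edge `e`, the sequence
`n ↦ n|_e` tends to infinity as `n → ∞`. -/
theorem res_tendsto_atTop {V E : Type*} [Fintype V] [Fintype E]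
    (src rng : E → V) (φV : V → V) (φE : E → E)
    (hφV : Function.Bijective φV) (hφE : Function.Bijective φE)
    (hsrc : ∀ e, src (φE e) = φV (src e))
    (hrng : ∀ e, rng (φE e) = φV (rng e))
    (res : ℕ → E → ℕ)
    (hres_zero : ∀ e, res 0 e = 0)
    (hres_add : ∀ p q e, res (p + q) e = res p (φE^[q] e) + res q e)
    (hres_src : ∀ p e, φV^[res p e] (src e) = φV^[p] (src e))
    (hA : ∀ e : E, ∃ m : ℕ, res m e ≠ 0) :
    ∀ e : E, Filter.Tendsto (fun n => res n e) Filter.atTop Filter.atTop := by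
  have mono : ∀ e, Monotone fun n => res n e := by
    intro e
    apply monotone_nat_of_le_succ
    intro n
    have h := hres_add 1 n e
    rw [show 1 + n = n + 1 from Nat.add_comm 1 n] at h
    rw [h]
    exact Nat.le_add_left _ _
  classical
  choose f hf using hA
  set M := Finset.univ.sup f with hM
  have hM1 : ∀ e, 1 ≤ res M e := by
    intro e
    have h1 : 1 ≤ res (f e) e := Nat.one_le_iff_ne_zero.mpr (hf e)
    exact h1.trans (mono e (Finset.le_sup (Finset.mem_univ e)))
  have key : ∀ k e, k ≤ res (k * M) e := by
    intro k
    induction k with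
    | zero => intro e; simp
    | succ k ih =>
        intro e
        have h : (k + 1) * M = M + k * M := by ring
        rw [h, hres_add M (k * M) e]
        have h1 := hM1 (φE^[k * M] e)
        have h2 := ih e
        omega
  intro e
  rw [Filter.tendsto_atTop]
  intro b
  rw [Filter.eventually_atTop]
  exact ⟨b * M, fun n hn => (key b e).trans (mono e hn)⟩
end

section
/- Let (ℕ, E) be a self-similar graph satisfying assumption (A). Then for every edge e ∈ E¹ and every k ∈ ℕ there exist q ∈ ℕ and p ∈ ℕ with p ≥ k such that q|_e = p (and hence setting f = q·e, the relation V^q S_e = S_f V^p holds in any Toeplitz representation). -/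
/-- Let `(ℕ, E)` be a self-similar graph satisfying assumption (A).
Then for every edge `e` and every `k ∈ ℕ` there exist `q, p ∈ ℕ` with `p ≥ k` and
`q|_e = p`; hence, setting `f = q·e`, the relation `V^q S_e = S_f V^p` holds in any
Toeplitz representation (i.e. in any family of operators satisfying (SS)). -/
theorem exists_large_restriction {V E : Type*} [Fintype V] [Fintype E]
    (src rng : E → V) (φV : V → V) (φE : E → E)
    (hφV : Function.Bijective φV) (hφE : Function.Bijective φE)
    (hsrc : ∀ e, src (φE e) = φV (src e))
    (hrng : ∀ e, rng (φE e) = φV (rng e))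
    (res : ℕ → E → ℕ)
    (hres_zero : ∀ e, res 0 e = 0)
    (hres_add : ∀ p q e, res (p + q) e = res p (φE^[q] e) + res q e)
    (hres_src : ∀ p e, φV^[res p e] (src e) = φV^[p] (src e))
    (hA : ∀ e : E, ∃ m : ℕ, res m e ≠ 0) :
    ∀ (e : E) (k : ℕ), ∃ q p : ℕ, k ≤ p ∧ res q e = p ∧
      ∀ (H : Type) (_ : NormedAddCommGroup H) (_ : InnerProductSpace ℂ H)
        (Vop : H →L[ℂ] H) (Top : E → H →L[ℂ] H),
        (∀ (n : ℕ) (f : E), Vop ^ n * Top f = Top (φE^[n] f) * Vop ^ res n f) →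
        Vop ^ q * Top e = Top (φE^[q] e) * Vop ^ p := by
  intro e k
  have key : ∀ k : ℕ, ∃ q : ℕ, k ≤ res q e := by
    intro k
    induction k with
    | zero => exact ⟨0, Nat.zero_le _⟩
    | succ n ih =>
      obtain ⟨q, hq⟩ := ih
      obtain ⟨m, hm⟩ := hA (φE^[q] e)
      refine ⟨m + q, ?_⟩
      rw [hres_add]
      omega
  obtain ⟨q, hq⟩ := key k
  exact ⟨q, res q e, hq, rfl, fun H _ _ Vop Top hSS => hSS q e⟩
end

section
/- Let ({V_p}, {S_μ}) satisfy the covariance (SS) condition where {S_μ} is a Cuntz-Krieger E-family (i.e., Σ_{e∈vE¹} S_e S_e* = S_v for every vertex v and Σ_v S_v = I). Then the Nica-covariance condition V_p* S_{p·μ} = S_μ V_{p|_μ}* holds for all p ∈ P and μ ∈ E*. -/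
/-- A self-similar action of a monoid `P` on a directed graph with vertices `V`
and edges `E`: `P` acts by graph automorphisms, together with a restriction map
satisfying the self-similar axioms (S1)-(S4). -/
structure SSG (P V E : Type*) [Monoid P] where
  src : E → V
  rng : E → V
  actV : P → V → V
  actE : P → E → E
  res : P → E → P
  actV_one : ∀ v, actV 1 v = v
  actV_mul : ∀ p q v, actV (p * q) v = actV p (actV q v)
  actE_one : ∀ e, actE 1 e = e
  actE_mul : ∀ p q e, actE (p * q) e = actE p (actE q e)
  actV_bij : ∀ p, Function.Bijective (actV p)
  actE_bij : ∀ p, Function.Bijective (actE p)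
  src_act : ∀ p e, src (actE p e) = actV p (src e)
  rng_act : ∀ p e, rng (actE p e) = actV p (rng e)
  /-- (S3): `1|_e = 1`. -/
  res_one : ∀ e, res 1 e = 1
  /-- (S1): `(pq)|_e = p|_{q·e} q|_e`. -/
  res_mul : ∀ p q e, res (p * q) e = res p (actE q e) * res q e
  /-- (S4): `p|_e · v = p · v` whenever `s(e) = v`. -/
  res_src : ∀ p e, actV (res p e) (src e) = actV p (src e)

namespace SSG

variable {P V E : Type*} [Monoid P] (G : SSG P V E)

/-- The extended action on finite paths: `p·(eμ) = (p·e)(p|_e·μ)`. -/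
def actPath : P → List E → List E
  | _, [] => []
  | p, e :: μ => G.actE p e :: actPath (G.res p e) μ

/-- The extended restriction on finite paths: `p|_{eμ} = (p|_e)|_μ`. -/
def resPath : P → List E → P
  | p, [] => p
  | p, e :: μ => resPath (G.res p e) μ

/-- A composable (directed) path: consecutive edges satisfy `s(e) = r(f)`. -/
def IsPath (l : List E) : Prop := l.Chain' (fun e f => G.src e = G.rng f)

end SSG


open ContinuousLinearMap in
lemma aux_sum_star_mul_self_zero {H : Type*} [NormedAddCommGroup H] [InnerProductSpace ℂ H]
    [CompleteSpace H] {ι : Type*} (s : Finset ι) (a : ι → H →L[ℂ] H)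
    (h : ∑ e ∈ s, star (a e) * a e = 0) : ∀ e ∈ s, a e = 0 := by
  intro e he
  ext x
  have key : ∀ f, RCLike.re ((inner ℂ ((star (a f) * a f) x) x : ℂ)) = ‖a f x‖ ^ 2 := by
    intro f
    rw [ContinuousLinearMap.mul_apply, ContinuousLinearMap.star_eq_adjoint,
      ContinuousLinearMap.adjoint_inner_left]
    exact inner_self_eq_norm_sq _
  have h2 : ∑ f ∈ s, ‖a f x‖ ^ 2 = 0 := by
    have h3 := congrArg (fun T : H →L[ℂ] H => RCLike.re ((inner ℂ (T x) x : ℂ))) h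
    simp only [ContinuousLinearMap.sum_apply, sum_inner, map_sum,
      ContinuousLinearMap.zero_apply, inner_zero_left, map_zero, key] at h3
    exact h3
  have h4 := (Finset.sum_eq_zero_iff_of_nonneg (fun f _ => sq_nonneg ‖a f x‖)).mp h2 e he
  simpa using (pow_eq_zero_iff (by norm_num)).mp h4

open ContinuousLinearMap in
/-- If `{V_p}` is an isometric representation of `P` and `{S_v}, {S_e}`
is a Cuntz-Krieger `E`-family (for a finite source-free graph) satisfying the covariance
condition (SS), then the Nica-covariance condition
`V_p* S_{p·μ} = S_μ V_{p|_μ}*` holds for all `p ∈ P` and all `μ ∈ E*`. -/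
theorem nc_of_ck {P V E : Type*} [Monoid P] [Fintype V] [Fintype E] [DecidableEq V]
    (G : SSG P V E) {H : Type*} [NormedAddCommGroup H] [InnerProductSpace ℂ H]
    [CompleteSpace H]
    (Vop : P → H →L[ℂ] H) (Sop : V → H →L[ℂ] H) (Top : E → H →L[ℂ] H)
    (hV1 : Vop 1 = 1) (hVmul : ∀ p q, Vop (p * q) = Vop p * Vop q)
    (hViso : ∀ p, adjoint (Vop p) * Vop p = 1)
    (hSidem : ∀ v, Sop v * Sop v = Sop v)
    (hSsa : ∀ v, adjoint (Sop v) = Sop v)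
    (hSorth : ∀ v w, v ≠ w → Sop v * Sop w = 0)
    (htck2 : ∀ e, adjoint (Top e) * Top e = Sop (G.src e))
    (hCK : ∀ v, ∑ e ∈ Finset.univ.filter (fun e => G.rng e = v),
        Top e * adjoint (Top e) = Sop v)
    (hunit : ∑ v : V, Sop v = 1)
    (hsourcefree : ∀ v : V, ∃ e : E, G.rng e = v)
    (hssv : ∀ p v, Vop p * Sop v = Sop (G.actV p v) * Vop p)
    (hsse : ∀ p e, Vop p * Top e = Top (G.actE p e) * Vop (G.res p e)) :
    (∀ (p : P) (μ : List E), G.IsPath μ →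
        adjoint (Vop p) * ((G.actPath p μ).map Top).prod
          = (μ.map Top).prod * adjoint (Vop (G.resPath p μ))) ∧
    (∀ p v, adjoint (Vop p) * Sop (G.actV p v) = Sop v * adjoint (Vop p)) := by

  classical
  simp only [← ContinuousLinearMap.star_eq_adjoint] at hViso htck2 hCK ⊢
  have hSstar : ∀ v, star (Sop v) = Sop v := by
    intro v; rw [ContinuousLinearMap.star_eq_adjoint]; exact hSsa v
  -- vertex Nica covariance
  have hvx : ∀ p v, star (Vop p) * Sop (G.actV p v) = Sop v * star (Vop p) := by
    intro p v
    have h := congrArg star (hssv p v)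
    rw [star_mul, star_mul, hSstar, hSstar] at h
    exact h.symm
  -- `T_e S_{s(e)} = T_e`
  have hTS : ∀ e, Top e * Sop (G.src e) = Top e := by
    intro e
    have hT : star (Top e) * Top e = Sop (G.src e) := htck2 e
    have e1 : star (Top e * Sop (G.src e) - Top e) * (Top e * Sop (G.src e) - Top e)
        = Sop (G.src e) * (star (Top e) * Top e) * Sop (G.src e)
          - Sop (G.src e) * (star (Top e) * Top e)
          - (star (Top e) * Top e) * Sop (G.src e) + star (Top e) * Top e := by
      simp only [star_sub, star_mul, hSstar]
      noncomm_ring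
    rw [hT] at e1
    simp only [hSidem] at e1
    have e2 : Sop (G.src e) - Sop (G.src e) - Sop (G.src e) + Sop (G.src e) = 0 := by abel
    rw [e2] at e1
    have := (CStarRing.star_mul_self_eq_zero_iff _).mp e1
    exact sub_eq_zero.mp this
  have hTTT : ∀ e, Top e * (star (Top e) * Top e) = Top e := by
    intro e; rw [htck2 e]; exact hTS e
  have hQQ : ∀ e, (Top e * star (Top e)) * (Top e * star (Top e)) = Top e * star (Top e) := by
    intro e
    calc (Top e * star (Top e)) * (Top e * star (Top e))
        = (Top e * (star (Top e) * Top e)) * star (Top e) := by noncomm_ring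
      _ = Top e * star (Top e) := by rw [hTTT]
  have hQsum : ∑ e : E, Top e * star (Top e) = 1 := by
    calc ∑ e : E, Top e * star (Top e)
        = ∑ v : V, ∑ e ∈ Finset.univ.filter (fun e => G.rng e = v), Top e * star (Top e) :=
          (Finset.sum_fiberwise_of_maps_to (fun e _ => Finset.mem_univ _) _).symm
      _ = ∑ v : V, Sop v := Finset.sum_congr rfl fun v _ => hCK v
      _ = 1 := hunit
  -- mutual orthogonality of the range projections
  have hQorth : ∀ e f, e ≠ f →
      (Top e * star (Top e)) * (Top f * star (Top f)) = 0 := by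
    intro e f hef
    have hrest : ∑ d ∈ Finset.univ.erase f, Top d * star (Top d)
        = 1 - Top f * star (Top f) := by
      rw [eq_sub_iff_add_eq, Finset.sum_erase_add _ _ (Finset.mem_univ f), hQsum]
    have hsum0 : ∑ d ∈ Finset.univ.erase f,
        star ((Top d * star (Top d)) * (Top f * star (Top f))) *
          ((Top d * star (Top d)) * (Top f * star (Top f))) = 0 := by
      have expand : ∀ d, star ((Top d * star (Top d)) * (Top f * star (Top f))) *
          ((Top d * star (Top d)) * (Top f * star (Top f)))
          = (Top f * star (Top f)) * (Top d * star (Top d)) * (Top f * star (Top f)) := by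
        intro d
        calc star ((Top d * star (Top d)) * (Top f * star (Top f))) *
            ((Top d * star (Top d)) * (Top f * star (Top f)))
            = (Top f * star (Top f)) *
                ((Top d * star (Top d)) * (Top d * star (Top d))) * (Top f * star (Top f)) := by
              simp only [star_mul, star_star]; noncomm_ring
          _ = (Top f * star (Top f)) * (Top d * star (Top d)) * (Top f * star (Top f)) := by
              rw [hQQ]
      calc ∑ d ∈ Finset.univ.erase f,
          star ((Top d * star (Top d)) * (Top f * star (Top f))) *
            ((Top d * star (Top d)) * (Top f * star (Top f)))
          = ∑ d ∈ Finset.univ.erase f,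
            (Top f * star (Top f)) * (Top d * star (Top d)) * (Top f * star (Top f)) :=
            Finset.sum_congr rfl fun d _ => expand d
        _ = (Top f * star (Top f)) * (∑ d ∈ Finset.univ.erase f, Top d * star (Top d)) *
            (Top f * star (Top f)) := by
            rw [Finset.mul_sum, Finset.sum_mul]
        _ = (Top f * star (Top f)) * (1 - Top f * star (Top f)) * (Top f * star (Top f)) := by
            rw [hrest]
        _ = (Top f * star (Top f)) * (Top f * star (Top f))
            - (Top f * star (Top f)) * (Top f * star (Top f)) * (Top f * star (Top f)) := by
            noncomm_ring
        _ = 0 := by rw [hQQ, hQQ]; abel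
    exact aux_sum_star_mul_self_zero _ _ hsum0 e (Finset.mem_erase.mpr ⟨hef, Finset.mem_univ e⟩)
  have hTorth : ∀ e f, e ≠ f → star (Top e) * Top f = 0 := by
    intro e f hef
    have hA : star (Top e) * (Top e * star (Top e)) = star (Top e) := by
      have h := congrArg star (hTTT e)
      simp only [star_mul, star_star] at h
      calc star (Top e) * (Top e * star (Top e))
          = star (Top e) * Top e * star (Top e) := by rw [mul_assoc]
        _ = star (Top e) := h
    have hB : (Top f * star (Top f)) * Top f = Top f := by
      rw [mul_assoc]; exact hTTT f
    calc star (Top e) * Top f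
        = (star (Top e) * (Top e * star (Top e))) * ((Top f * star (Top f)) * Top f) := by
          rw [hA, hB]
      _ = star (Top e) * (((Top e * star (Top e)) * (Top f * star (Top f))) * Top f) := by
          noncomm_ring
      _ = 0 := by rw [hQorth e f hef]; simp
  -- resolution of V_p*
  have hres : ∀ p, star (Vop p)
      = ∑ f : E, Top f * (star (Vop (G.res p f)) * star (Top (G.actE p f))) := by
    intro p
    calc star (Vop p) = (∑ f : E, Top f * star (Top f)) * star (Vop p) := by
          rw [hQsum, one_mul]
      _ = ∑ f : E, Top f * star (Vop p * Top f) := by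
          rw [Finset.sum_mul]
          exact Finset.sum_congr rfl fun f _ => by rw [star_mul, mul_assoc]
      _ = ∑ f : E, Top f * star (Top (G.actE p f) * Vop (G.res p f)) := by
          exact Finset.sum_congr rfl fun f _ => by rw [hsse]
      _ = ∑ f : E, Top f * (star (Vop (G.res p f)) * star (Top (G.actE p f))) := by
          exact Finset.sum_congr rfl fun f _ => by rw [star_mul]
  -- edge Nica covariance
  have hedge : ∀ p e, star (Vop p) * Top (G.actE p e)
      = Top e * star (Vop (G.res p e)) := by
    intro p e
    rw [hres p, Finset.sum_mul, Finset.sum_eq_single e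
      (fun f _ hfe => by
        have h0 : star (Top (G.actE p f)) * Top (G.actE p e) = 0 :=
          hTorth _ _ (fun h => hfe ((G.actE_bij p).1 h))
        calc Top f * (star (Vop (G.res p f)) * star (Top (G.actE p f))) * Top (G.actE p e)
            = Top f * star (Vop (G.res p f)) *
                (star (Top (G.actE p f)) * Top (G.actE p e)) := by noncomm_ring
          _ = 0 := by rw [h0, mul_zero])
      (fun h => absurd (Finset.mem_univ e) h)]
    have h1 : star (Top (G.actE p e)) * Top (G.actE p e) = Sop (G.src (G.actE p e)) := htck2 _
    have h2 : G.src (G.actE p e) = G.actV (G.res p e) (G.src e) := by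
      rw [G.src_act, G.res_src]
    calc Top e * (star (Vop (G.res p e)) * star (Top (G.actE p e))) * Top (G.actE p e)
        = Top e * (star (Vop (G.res p e)) *
            (star (Top (G.actE p e)) * Top (G.actE p e))) := by noncomm_ring
      _ = Top e * (star (Vop (G.res p e)) * Sop (G.actV (G.res p e) (G.src e))) := by
          rw [h1, h2]
      _ = Top e * (Sop (G.src e) * star (Vop (G.res p e))) := by rw [hvx]
      _ = (Top e * Sop (G.src e)) * star (Vop (G.res p e)) := by rw [mul_assoc]
      _ = Top e * star (Vop (G.res p e)) := by rw [hTS]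
  refine ⟨?_, fun p v => hvx p v⟩
  intro p mu hmu
  clear hmu
  induction mu generalizing p with
  | nil => simp [SSG.actPath, SSG.resPath]
  | cons e nu ih =>
    simp only [SSG.actPath, SSG.resPath, List.map_cons, List.prod_cons]
    rw [← mul_assoc, hedge, mul_assoc, ih (G.res p e), ← mul_assoc]
end

section
/- Let V be an isometry on a Hilbert space H, with Wold decomposition H = H^U ⊕ H^S where H^U = ∩_{n≥0} VⁿH and H^S = ⊕_{n≥0} Vⁿ(ker V*). Let ({Vⁿ}, {S_μ}) be a Toeplitz representation of a self-similar graph (ℕ, E) on H satisfying assumption (A). Then H^U and H^S each reduce every operator S_μ (μ ∈ E⁰ ∪ E¹). -/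
/-!
Each of `S_v = S_v*`, `T_e` and `T_e*` intertwines powers of `V` up to a bounded operator,
`A Vᵐ = Vⁿ B`, so it maps `H^U = ⋂ VⁿH` into itself; hence `H^U` reduces `S_v` and `T_e`.
For `T_e*` this comes from (NC) at a `k` with `φ_E^k e = e`: then `T_e* Vᵏ = V^{k|_e} T_e*`, and
since `φ_E` has finite order, assumption (A) makes `k|_e` as large as needed.
For `H^S`, the Wold decomposition `V^{n+1}H = VⁿH ⊓ (Vⁿ ker V*)ᗮ` gives `cl H^S = (H^U)ᗮ`,
and the orthogonal complement of a reducing subspace is reducing.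
-/

open ContinuousLinearMap

/-- A subspace `M` reduces an operator `A` if both `A` and `A*` leave `M` invariant. -/
def ReducesOp {H : Type*} [NormedAddCommGroup H] [InnerProductSpace ℂ H]
    [CompleteSpace H] (A : H →L[ℂ] H) (M : Submodule ℂ H) : Prop :=
  Submodule.map (A : H →ₗ[ℂ] H) M ≤ M ∧ Submodule.map ((adjoint A : H →L[ℂ] H) : H →ₗ[ℂ] H) M ≤ M

open scoped InnerProductSpace

section Isometry

variable {𝕜 H : Type*} [RCLike 𝕜] [NormedAddCommGroup H] [InnerProductSpace 𝕜 H] [CompleteSpace H]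
  {V : H →L[𝕜] H}

theorem adjoint_pow_mul_pow_of_adjoint_mul_self (hV : adjoint V * V = 1) (n : ℕ) :
    adjoint (V ^ n) * V ^ n = 1 := by
  rw [← star_eq_adjoint, star_pow]
  exact pow_mul_pow_eq_one n hV

theorem inner_map_map_of_adjoint_mul_self (hV : adjoint V * V = 1) (x y : H) :
    ⟪V x, V y⟫_𝕜 = ⟪x, y⟫_𝕜 :=
  V.inner_map_map_iff_adjoint_comp_self.mpr hV x y

theorem orthogonal_ker_adjoint_of_adjoint_mul_self (hV : adjoint V * V = 1) :
    (LinearMap.ker ((adjoint V : H →L[𝕜] H) : H →ₗ[𝕜] H))ᗮ = LinearMap.range (V : H →ₗ[𝕜] H) := by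
  have hclosed : IsClosed (LinearMap.range (V : H →ₗ[𝕜] H) : Set H) := by
    rw [LinearMap.coe_range]
    exact ((V.isometry_iff_adjoint_comp_self).mpr hV).isClosedEmbedding.isClosed_range
  rw [(adjoint V).orthogonal_ker, adjoint_adjoint]
  exact hclosed.submodule_topologicalClosure_eq

theorem range_pow_succ_eq_of_adjoint_mul_self (hV : adjoint V * V = 1) (n : ℕ) :
    LinearMap.range ((V ^ (n + 1) : H →L[𝕜] H) : H →ₗ[𝕜] H) =
      LinearMap.range ((V ^ n : H →L[𝕜] H) : H →ₗ[𝕜] H) ⊓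
        (Submodule.map ((V ^ n : H →L[𝕜] H) : H →ₗ[𝕜] H)
          (LinearMap.ker ((adjoint V : H →L[𝕜] H) : H →ₗ[𝕜] H)))ᗮ := by
  have hVn := inner_map_map_of_adjoint_mul_self (adjoint_pow_mul_pow_of_adjoint_mul_self hV n)
  ext x
  simp only [Submodule.mem_inf, Submodule.mem_orthogonal, Submodule.mem_map, LinearMap.mem_range,
    LinearMap.mem_ker, ContinuousLinearMap.coe_coe, forall_exists_index, and_imp]
  constructor
  · rintro ⟨y, rfl⟩
    refine ⟨⟨V y, by rw [pow_succ]; rfl⟩, ?_⟩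
    rintro _ k hk rfl
    rw [pow_succ, mul_apply_eq_comp, hVn, ← adjoint_inner_left, hk, inner_zero_left]
  · rintro ⟨⟨y, rfl⟩, hy⟩
    have : y ∈ LinearMap.range (V : H →ₗ[𝕜] H) := by
      rw [← orthogonal_ker_adjoint_of_adjoint_mul_self hV]
      intro k hk
      rw [← hVn]
      exact hy _ k hk rfl
    obtain ⟨z, rfl⟩ := this
    exact ⟨z, by rw [pow_succ]; rfl⟩

theorem iInf_range_pow_eq_of_adjoint_mul_self (hV : adjoint V * V = 1) :
    ⨅ n : ℕ, LinearMap.range ((V ^ n : H →L[𝕜] H) : H →ₗ[𝕜] H) =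
      ⨅ n : ℕ, (Submodule.map ((V ^ n : H →L[𝕜] H) : H →ₗ[𝕜] H)
        (LinearMap.ker ((adjoint V : H →L[𝕜] H) : H →ₗ[𝕜] H)))ᗮ := by
  ext x
  simp only [Submodule.mem_iInf]
  constructor
  · intro hx n
    exact (range_pow_succ_eq_of_adjoint_mul_self hV n ▸ hx (n + 1)).2
  · intro hx n
    induction n with
    | zero => exact ⟨x, by simp⟩
    | succ n ih => exact range_pow_succ_eq_of_adjoint_mul_self hV n ▸ ⟨ih, hx n⟩

theorem topologicalClosure_iSup_map_pow_ker_adjoint (hV : adjoint V * V = 1) :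
    (⨆ n : ℕ, Submodule.map ((V ^ n : H →L[𝕜] H) : H →ₗ[𝕜] H)
        (LinearMap.ker ((adjoint V : H →L[𝕜] H) : H →ₗ[𝕜] H))).topologicalClosure =
      (⨅ n : ℕ, LinearMap.range ((V ^ n : H →L[𝕜] H) : H →ₗ[𝕜] H))ᗮ := by
  rw [iInf_range_pow_eq_of_adjoint_mul_self hV, Submodule.iInf_orthogonal,
    Submodule.orthogonal_orthogonal_eq_closure]

end Isometry

theorem map_iInf_range_pow_le {R M : Type*} [Semiring R] [AddCommMonoid M] [Module R M]
    [TopologicalSpace M] {A V : M →L[R] M} (h : ∀ n, ∃ m B, A * V ^ m = V ^ n * B) :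
    Submodule.map (A : M →ₗ[R] M) (⨅ n : ℕ, LinearMap.range ((V ^ n : M →L[R] M) : M →ₗ[R] M)) ≤
      ⨅ n : ℕ, LinearMap.range ((V ^ n : M →L[R] M) : M →ₗ[R] M) := by
  rintro _ ⟨x, hx, rfl⟩
  simp only [SetLike.mem_coe, Submodule.mem_iInf] at hx ⊢
  intro n
  obtain ⟨m, B, hAB⟩ := h n
  obtain ⟨y, rfl⟩ := hx m
  exact ⟨B y, by simp only [coe_coe, ← mul_apply_eq_comp, hAB]⟩

theorem Function.Injective.exists_iterate_eq_self_le {α : Type*} [Finite α] {f : α → α}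
    (hf : Function.Injective f) {g : ℕ → ℕ} (hg : Filter.Tendsto g Filter.atTop Filter.atTop)
    (a : α) (m : ℕ) : ∃ n, f^[n] a = a ∧ m ≤ g n := by
  obtain ⟨p, hp, hper⟩ := Function.mem_periodicPts.mp (hf.mem_periodicPts a)
  obtain ⟨N, hN⟩ := Filter.eventually_atTop.mp (hg.eventually_ge_atTop m)
  exact ⟨p * N, hper.mul_const N, hN _ (Nat.le_mul_of_pos_left N hp)⟩

section Reduces

variable {H : Type*} [NormedAddCommGroup H] [InnerProductSpace ℂ H] [CompleteSpace H]
  {A V : H →L[ℂ] H}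

theorem ReducesOp.orthogonal {M : Submodule ℂ H} (h : ReducesOp A M) : ReducesOp A Mᗮ := by
  constructor
  · rintro _ ⟨x, hx, rfl⟩ u hu
    rw [coe_coe, ← adjoint_inner_left]
    exact hx _ (h.2 ⟨u, hu, rfl⟩)
  · rintro _ ⟨x, hx, rfl⟩ u hu
    rw [coe_coe, ← adjoint_inner_left, adjoint_adjoint]
    exact hx _ (h.1 ⟨u, hu, rfl⟩)

theorem reducesOp_wold_pieces (hV : adjoint V * V = 1)
    (hA : ∀ n, ∃ m B, A * V ^ m = V ^ n * B) (hA' : ∀ n, ∃ m B, adjoint A * V ^ m = V ^ n * B) :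
    ReducesOp A (⨅ n : ℕ, LinearMap.range ((V ^ n : H →L[ℂ] H) : H →ₗ[ℂ] H)) ∧
      ReducesOp A ((⨆ n : ℕ, Submodule.map ((V ^ n : H →L[ℂ] H) : H →ₗ[ℂ] H)
        (LinearMap.ker ((adjoint V : H →L[ℂ] H) : H →ₗ[ℂ] H))).topologicalClosure) := by
  have hU : ReducesOp A _ := ⟨map_iInf_range_pow_le hA, map_iInf_range_pow_le hA'⟩
  exact ⟨hU, topologicalClosure_iSup_map_pow_ker_adjoint hV ▸ hU.orthogonal⟩

end Reduces

theorem wold_pieces_reduce_general {V E : Type*} [Fintype E]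
    (φV : V → V) (φE : E → E)
    (hφV : Function.Bijective φV) (hφE : Function.Bijective φE)
    (res : ℕ → E → ℕ)
    (hA : ∀ e : E, Filter.Tendsto (fun n => res n e) Filter.atTop Filter.atTop)
    {H : Type*} [NormedAddCommGroup H] [InnerProductSpace ℂ H] [CompleteSpace H]
    (Vop : H →L[ℂ] H) (Sop : V → H →L[ℂ] H) (Top : E → H →L[ℂ] H)
    (hViso : adjoint Vop * Vop = 1)
    (hSsa : ∀ v, adjoint (Sop v) = Sop v)
    (hssv : ∀ (n : ℕ) (v : V), Vop ^ n * Sop v = Sop (φV^[n] v) * Vop ^ n)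
    (hsse : ∀ (n : ℕ) (e : E), Vop ^ n * Top e = Top (φE^[n] e) * Vop ^ res n e)
    (hnce : ∀ (n : ℕ) (e : E),
        adjoint (Vop ^ n) * Top (φE^[n] e) = Top e * adjoint (Vop ^ res n e)) :
    (∀ v : V, ReducesOp (Sop v) (⨅ n : ℕ, LinearMap.range ((Vop ^ n : H →L[ℂ] H) : H →ₗ[ℂ] H)) ∧
        ReducesOp (Sop v)
          ((⨆ n : ℕ, Submodule.map ((Vop ^ n : H →L[ℂ] H) : H →ₗ[ℂ] H)
              (LinearMap.ker ((adjoint Vop : H →L[ℂ] H) : H →ₗ[ℂ] H))).topologicalClosure)) ∧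
    (∀ e : E, ReducesOp (Top e) (⨅ n : ℕ, LinearMap.range ((Vop ^ n : H →L[ℂ] H) : H →ₗ[ℂ] H)) ∧
        ReducesOp (Top e)
          ((⨆ n : ℕ, Submodule.map ((Vop ^ n : H →L[ℂ] H) : H →ₗ[ℂ] H)
              (LinearMap.ker ((adjoint Vop : H →L[ℂ] H) : H →ₗ[ℂ] H))).topologicalClosure)) := by
  have hS : ∀ v n, ∃ m B, Sop v * Vop ^ m = Vop ^ n * B := fun v n => by
    obtain ⟨w, rfl⟩ := (hφV.iterate n).2 v
    exact ⟨n, Sop w, (hssv n w).symm⟩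
  refine ⟨fun v => reducesOp_wold_pieces hViso (hS v) (by simpa only [hSsa] using hS v),
    fun e => reducesOp_wold_pieces hViso (fun n => ?_) (fun n => ?_)⟩
  · obtain ⟨f, rfl⟩ := (hφE.iterate n).2 e
    exact ⟨res n f, Top f, (hsse n f).symm⟩
  · obtain ⟨k, hk, hle⟩ := hφE.1.exists_iterate_eq_self_le (hA e) e n
    have hTk : adjoint (Top e) * Vop ^ k = Vop ^ res k e * adjoint (Top e) := by
      simpa only [hk, ← star_eq_adjoint, star_mul, star_star, star_pow] using
        congrArg star (hnce k e)
    refine ⟨k, Vop ^ (res k e - n) * adjoint (Top e), ?_⟩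
    rw [hTk, ← mul_assoc, ← pow_add, Nat.add_sub_cancel' hle]

/-- Let `V` be an isometry on a Hilbert space `H`, with Wold decomposition
`H = H^U ⊕ H^S` where `H^U = ∩ₙ VⁿH` and `H^S = ⊕ₙ Vⁿ(ker V*)`.  If `({Vⁿ}, {S_μ})` is a
Toeplitz representation of a self-similar graph `(ℕ, E)` satisfying assumption (A),
then `H^U` and `H^S` each reduce every operator `S_μ` (for `μ ∈ E⁰ ∪ E¹`). -/
theorem wold_pieces_reduce {V E : Type*} [Fintype V] [Fintype E] [DecidableEq V]
    (src rng : E → V) (φV : V → V) (φE : E → E)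
    (hφV : Function.Bijective φV) (hφE : Function.Bijective φE)
    (hsrc : ∀ e, src (φE e) = φV (src e))
    (hrng : ∀ e, rng (φE e) = φV (rng e))
    (res : ℕ → E → ℕ)
    (hres_zero : ∀ e, res 0 e = 0)
    (hres_add : ∀ p q e, res (p + q) e = res p (φE^[q] e) + res q e)
    (hres_src : ∀ p e, φV^[res p e] (src e) = φV^[p] (src e))
    (hA : ∀ e : E, Filter.Tendsto (fun n => res n e) Filter.atTop Filter.atTop)
    {H : Type*} [NormedAddCommGroup H] [InnerProductSpace ℂ H] [CompleteSpace H]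
    (Vop : H →L[ℂ] H) (Sop : V → H →L[ℂ] H) (Top : E → H →L[ℂ] H)
    (hViso : adjoint Vop * Vop = 1)
    (hSidem : ∀ v, Sop v * Sop v = Sop v)
    (hSsa : ∀ v, adjoint (Sop v) = Sop v)
    (hSorth : ∀ v w, v ≠ w → Sop v * Sop w = 0)
    (htck2 : ∀ e, adjoint (Top e) * Top e = Sop (src e))
    (htck3 : ∀ v, (Sop v - ∑ e ∈ Finset.univ.filter (fun e => rng e = v),
        Top e * adjoint (Top e)).IsPositive)
    (hssv : ∀ (n : ℕ) (v : V), Vop ^ n * Sop v = Sop (φV^[n] v) * Vop ^ n)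
    (hsse : ∀ (n : ℕ) (e : E), Vop ^ n * Top e = Top (φE^[n] e) * Vop ^ res n e)
    (hncv : ∀ (n : ℕ) (v : V),
        adjoint (Vop ^ n) * Sop (φV^[n] v) = Sop v * adjoint (Vop ^ n))
    (hnce : ∀ (n : ℕ) (e : E),
        adjoint (Vop ^ n) * Top (φE^[n] e) = Top e * adjoint (Vop ^ res n e)) :
    (∀ v : V, ReducesOp (Sop v) (⨅ n : ℕ, LinearMap.range ((Vop ^ n : H →L[ℂ] H) : H →ₗ[ℂ] H)) ∧
        ReducesOp (Sop v)
          ((⨆ n : ℕ, Submodule.map ((Vop ^ n : H →L[ℂ] H) : H →ₗ[ℂ] H)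
              (LinearMap.ker ((adjoint Vop : H →L[ℂ] H) : H →ₗ[ℂ] H))).topologicalClosure)) ∧
    (∀ e : E, ReducesOp (Top e) (⨅ n : ℕ, LinearMap.range ((Vop ^ n : H →L[ℂ] H) : H →ₗ[ℂ] H)) ∧
        ReducesOp (Top e)
          ((⨆ n : ℕ, Submodule.map ((Vop ^ n : H →L[ℂ] H) : H →ₗ[ℂ] H)
              (LinearMap.ker ((adjoint Vop : H →L[ℂ] H) : H →ₗ[ℂ] H))).topologicalClosure)) :=
  wold_pieces_reduce_general φV φE hφV hφE res hA Vop Sop Top hViso hSsa hssv hsse hnce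
end

section
/- Let ({V_p}, {S_μ}) be a Toeplitz representation of a self-similar graph (P, E) where each V_p is unitary and {S_μ} is a Cuntz-Krieger family. Then the representation is maximal: any dilation ({V_p'}, {S_μ'}) on a larger Hilbert space K ⊇ H (with V_p', S_μ' compressing to V_p, S_μ and forming a Toeplitz representation) decomposes as a direct sum, i.e., H reduces all V_p' and S_μ'. -/
open ContinuousLinearMap RCLike

section DilationAux

variable {H K : Type*} [NormedAddCommGroup H] [InnerProductSpace ℂ H] [CompleteSpace H]
  [NormedAddCommGroup K] [InnerProductSpace ℂ K] [CompleteSpace K]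

private lemma real_sq_eq {a b : ℝ} (ha : 0 ≤ a) (hb : 0 ≤ b) (h : a ^ 2 = b ^ 2) : a = b :=
  le_antisymm (by nlinarith) (by nlinarith)

private lemma normsq_eq (A : H →L[ℂ] K) (x : H) :
    ‖A x‖ ^ 2 = re (inner ℂ ((adjoint A ∘L A) x) x : ℂ) := by
  rw [comp_apply, adjoint_inner_left, inner_self_eq_norm_sq]

private lemma isom_norm (A : H →L[ℂ] K) (hA : adjoint A ∘L A = 1) (w : H) : ‖A w‖ = ‖w‖ := by
  refine real_sq_eq (norm_nonneg _) (norm_nonneg _) ?_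
  rw [normsq_eq A w, hA, ContinuousLinearMap.one_apply, inner_self_eq_norm_sq]

private lemma adj_contract (A : H →L[ℂ] K) (hA : adjoint A ∘L A = 1) (y : K) :
    ‖adjoint A y‖ ≤ ‖y‖ := by
  calc ‖adjoint A y‖ ≤ ‖adjoint A‖ * ‖y‖ := le_opNorm _ _
    _ ≤ 1 * ‖y‖ := by
        have h1 : ‖A‖ ≤ 1 := opNorm_le_bound _ zero_le_one
          (fun x => by rw [isom_norm A hA, one_mul])
        have h2 : ‖adjoint A‖ = ‖A‖ := LinearIsometryEquiv.norm_map adjoint A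
        gcongr
        rw [h2]; exact h1
    _ = ‖y‖ := one_mul _

private lemma proj_fix (ι : H →L[ℂ] K) (hι : adjoint ι ∘L ι = 1) (y : K)
    (h : ‖adjoint ι y‖ = ‖y‖) : ι (adjoint ι y) = y := by
  have h1 : (inner ℂ (ι (adjoint ι y)) y : ℂ) = inner ℂ (adjoint ι y) (adjoint ι y) :=
    (adjoint_inner_right ι (adjoint ι y) y).symm
  have hz : ‖ι (adjoint ι y) - y‖ ^ 2 = 0 := by
    rw [norm_sub_sq (𝕜 := ℂ), h1, inner_self_eq_norm_sq, isom_norm ι hι, h]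
    ring
  have : ι (adjoint ι y) - y = 0 := by
    rw [← norm_eq_zero]
    exact pow_eq_zero_iff two_ne_zero |>.mp hz
  exact sub_eq_zero.mp this

private lemma adj_dil (ι : H →L[ℂ] K) (A : K →L[ℂ] K) (B : H →L[ℂ] H)
    (h : adjoint ι ∘L (A ∘L ι) = B) :
    adjoint ι ∘L (adjoint A ∘L ι) = adjoint B := by
  subst h
  simp only [adjoint_comp, adjoint_adjoint, comp_assoc]

private lemma dil_fix (ι : H →L[ℂ] K) (hι : adjoint ι ∘L ι = 1) (A : K →L[ℂ] K) (B : H →L[ℂ] H)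
    (hdil : adjoint ι ∘L (A ∘L ι) = B) (x : H)
    (hnorm : ‖A (ι x)‖ = ‖B x‖) : A (ι x) = ι (B x) := by
  have hB : adjoint ι (A (ι x)) = B x := by
    have := DFunLike.congr_fun hdil x
    simpa [comp_apply] using this
  have := proj_fix ι hι (A (ι x)) (by rw [hB, hnorm])
  rw [hB] at this
  exact this.symm

private lemma normsq_dil (ι : H →L[ℂ] K) (A : K →L[ℂ] K) (B : H →L[ℂ] H)
    (C : K →L[ℂ] K) (D : H →L[ℂ] H)
    (hA : adjoint A ∘L A = C) (hB : adjoint B ∘L B = D)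
    (hdil : adjoint ι ∘L (C ∘L ι) = D) (x : H) : ‖A (ι x)‖ = ‖B x‖ := by
  refine real_sq_eq (norm_nonneg _) (norm_nonneg _) ?_
  rw [normsq_eq A, normsq_eq B, hA, hB]
  congr 1
  have hD := DFunLike.congr_fun hdil x
  simp only [comp_apply] at hD
  rw [← hD, adjoint_inner_left]

private lemma reduce_of (ι : H →L[ℂ] K) (A : K →L[ℂ] K) (B : H →L[ℂ] H)
    (h1 : ∀ x, A (ι x) = ι (B x))
    (h2 : ∀ x, adjoint A (ι x) = ι (adjoint B x)) :
    A ∘L (ι ∘L adjoint ι) = (ι ∘L adjoint ι) ∘L A := by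
  have e2 : adjoint A ∘L ι = ι ∘L adjoint B := by ext x; simpa using h2 x
  have e3 : adjoint ι ∘L A = B ∘L adjoint ι := by
    have := congrArg adjoint e2
    simpa only [adjoint_comp, adjoint_adjoint] using this
  ext y
  have h3 := DFunLike.congr_fun e3 y
  simp only [comp_apply] at h3 ⊢
  rw [h1, h3]


private lemma sum_adj_normsq {W : Type*} [NormedAddCommGroup W] [InnerProductSpace ℂ W]
    [CompleteSpace W] {ι' : Type*} (s : Finset ι') (T : ι' → (W →L[ℂ] W)) (y : W) :
    ∑ f ∈ s, ‖adjoint (T f) y‖ ^ 2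
      = RCLike.re (inner ℂ ((∑ f ∈ s, T f * adjoint (T f)) y) y : ℂ) := by
  rw [sum_apply, sum_inner, map_sum]
  refine Finset.sum_congr rfl fun f _ => ?_
  rw [normsq_eq (adjoint (T f)), adjoint_adjoint, mul_def]

end DilationAux

open ContinuousLinearMap in
/-- A Toeplitz representation of a self-similar graph `(P, E)` on a Hilbert space `H`:
an isometric representation `Vop` of `P`, together with a Toeplitz-Cuntz-Krieger
`E`-family (`Sop` on vertices, `Top` on edges), satisfying the covariance condition (SS)
and the Nica-covariance condition (NC). -/
structure ToeplitzRep {P V E : Type*} [Monoid P] [Fintype E] [DecidableEq V]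
    (G : SSG P V E) (H : Type*) [NormedAddCommGroup H] [InnerProductSpace ℂ H]
    [CompleteSpace H] where
  Vop : P → H →L[ℂ] H
  Sop : V → H →L[ℂ] H
  Top : E → H →L[ℂ] H
  V_one : Vop 1 = 1
  V_mul : ∀ p q, Vop (p * q) = Vop p * Vop q
  V_isometry : ∀ p, adjoint (Vop p) * Vop p = 1
  S_idem : ∀ v, Sop v * Sop v = Sop v
  S_selfAdjoint : ∀ v, adjoint (Sop v) = Sop v
  S_orth : ∀ v w, v ≠ w → Sop v * Sop w = 0
  tck2 : ∀ e, adjoint (Top e) * Top e = Sop (G.src e)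
  tck3 : ∀ v, (Sop v - ∑ e ∈ Finset.univ.filter (fun e => G.rng e = v),
      Top e * adjoint (Top e)).IsPositive
  ss_v : ∀ p v, Vop p * Sop v = Sop (G.actV p v) * Vop p
  ss_e : ∀ p e, Vop p * Top e = Top (G.actE p e) * Vop (G.res p e)
  nc_v : ∀ p v, adjoint (Vop p) * Sop (G.actV p v) = Sop v * adjoint (Vop p)
  nc_e : ∀ p e, adjoint (Vop p) * Top (G.actE p e) = Top e * adjoint (Vop (G.res p e))

open ContinuousLinearMap in
/-- Let `({V_p}, {S_μ})` be a Toeplitz representation of a self-similar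
graph `(P, E)` in which each `V_p` is unitary and the `E`-family is Cuntz-Krieger.
Then the representation is maximal: for any dilation `({V_p'}, {S_μ'})` on a larger
Hilbert space `K ⊇ H` (here `ι : H → K` is the isometric inclusion and the dilation
compresses to the original representation), the subspace `H` reduces all the operators
`V_p'` and `S_μ'`, i.e. they all commute with the projection `ι ι*` onto `H`. -/
theorem unitary_ck_maximal {P V E : Type*} [Monoid P] [Fintype V] [Fintype E]
    [DecidableEq V] (G : SSG P V E)
    {H : Type*} [NormedAddCommGroup H] [InnerProductSpace ℂ H] [CompleteSpace H]
    {K : Type*} [NormedAddCommGroup K] [InnerProductSpace ℂ K] [CompleteSpace K]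
    (ρ : ToeplitzRep G H) (ρ' : ToeplitzRep G K)
    (hVunitary : ∀ p, ρ.Vop p * adjoint (ρ.Vop p) = 1)
    (hCK : ∀ v, ∑ e ∈ Finset.univ.filter (fun e => G.rng e = v),
        ρ.Top e * adjoint (ρ.Top e) = ρ.Sop v)
    (hunit : ∑ v : V, ρ.Sop v = 1)
    (ι : H →L[ℂ] K) (hι : adjoint ι ∘L ι = 1)
    (hdilV : ∀ p, adjoint ι ∘L (ρ'.Vop p ∘L ι) = ρ.Vop p)
    (hdilS : ∀ v, adjoint ι ∘L (ρ'.Sop v ∘L ι) = ρ.Sop v)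
    (hdilT : ∀ e, adjoint ι ∘L (ρ'.Top e ∘L ι) = ρ.Top e) :
    (∀ p, ρ'.Vop p ∘L (ι ∘L adjoint ι) = (ι ∘L adjoint ι) ∘L ρ'.Vop p) ∧
    (∀ v, ρ'.Sop v ∘L (ι ∘L adjoint ι) = (ι ∘L adjoint ι) ∘L ρ'.Sop v) ∧
    (∀ e, ρ'.Top e ∘L (ι ∘L adjoint ι) = (ι ∘L adjoint ι) ∘L ρ'.Top e) := by
  
  classical
  have hone : (adjoint ι ∘L ((1 : K →L[ℂ] K) ∘L ι) : H →L[ℂ] H) = 1 := by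
    ext x; simpa [comp_apply] using DFunLike.congr_fun hι x
  -- Step 1: V' ι = ι V
  have hV1 : ∀ p x, ρ'.Vop p (ι x) = ι (ρ.Vop p x) := by
    intro p x
    refine dil_fix ι hι _ _ (hdilV p) x ?_
    exact normsq_dil ι _ _ 1 1 (by rw [← mul_def]; exact ρ'.V_isometry p)
      (by rw [← mul_def]; exact ρ.V_isometry p) hone x
  -- Step 2: V'* ι = ι V*
  have hV2 : ∀ p x, adjoint (ρ'.Vop p) (ι x) = ι (adjoint (ρ.Vop p) x) := by
    intro p x
    refine dil_fix ι hι _ _ (adj_dil ι _ _ (hdilV p)) x ?_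
    have hle1 : ‖adjoint (ρ'.Vop p) (ι x)‖ ≤ ‖adjoint (ρ.Vop p) x‖ := by
      have h1 : ‖ι x‖ = ‖x‖ := isom_norm ι hι x
      have h2 : ‖adjoint (ρ.Vop p) x‖ = ‖x‖ :=
        isom_norm (adjoint (ρ.Vop p))
          (by rw [adjoint_adjoint, ← mul_def]; exact hVunitary p) x
      have h3 := adj_contract (ρ'.Vop p)
        (by rw [← mul_def]; exact ρ'.V_isometry p) (ι x)
      rw [h2]; rw [h1] at h3; exact h3
    have hle2 : ‖adjoint (ρ.Vop p) x‖ ≤ ‖adjoint (ρ'.Vop p) (ι x)‖ := by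
      have h4 := DFunLike.congr_fun (adj_dil ι _ _ (hdilV p)) x
      simp only [comp_apply] at h4
      rw [← h4]
      exact adj_contract ι hι _
    exact le_antisymm hle1 hle2
  -- Step 3: S' ι = ι S
  have hS1 : ∀ v x, ρ'.Sop v (ι x) = ι (ρ.Sop v x) := by
    intro v x
    refine dil_fix ι hι _ _ (hdilS v) x ?_
    refine normsq_dil ι _ _ (ρ'.Sop v) (ρ.Sop v) ?_ ?_ (hdilS v) x
    · rw [ρ'.S_selfAdjoint, ← mul_def]; exact ρ'.S_idem v
    · rw [ρ.S_selfAdjoint, ← mul_def]; exact ρ.S_idem v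
  -- Step 4: T' ι = ι T
  have hT1 : ∀ e x, ρ'.Top e (ι x) = ι (ρ.Top e x) := by
    intro e x
    refine dil_fix ι hι _ _ (hdilT e) x ?_
    refine normsq_dil ι _ _ (ρ'.Sop (G.src e)) (ρ.Sop (G.src e)) ?_ ?_ (hdilS _) x
    · rw [← mul_def]; exact ρ'.tck2 e
    · rw [← mul_def]; exact ρ.tck2 e
  -- Step 5: T'* ι = ι T* (uses the Cuntz-Krieger relation)
  have hT2 : ∀ e x, adjoint (ρ'.Top e) (ι x) = ι (adjoint (ρ.Top e) x) := by
    intro e x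
    have hadjdil : ∀ f, adjoint ι ∘L (adjoint (ρ'.Top f) ∘L ι) = adjoint (ρ.Top f) :=
      fun f => adj_dil ι _ _ (hdilT f)
    have hpt : ∀ f, adjoint ι (adjoint (ρ'.Top f) (ι x)) = adjoint (ρ.Top f) x := by
      intro f
      have := DFunLike.congr_fun (hadjdil f) x
      simpa [comp_apply] using this
    have he : e ∈ Finset.univ.filter (fun f => G.rng f = G.rng e) := by simp
    have hle : ∀ f ∈ Finset.univ.filter (fun f => G.rng f = G.rng e),
        ‖adjoint (ρ.Top f) x‖ ^ 2 ≤ ‖adjoint (ρ'.Top f) (ι x)‖ ^ 2 := by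
      intro f _
      have h5 := adj_contract ι hι (adjoint (ρ'.Top f) (ι x))
      rw [hpt f] at h5
      exact pow_le_pow_left₀ (norm_nonneg _) h5 2
    have hsum : ∑ f ∈ Finset.univ.filter (fun f => G.rng f = G.rng e),
          ‖adjoint (ρ'.Top f) (ι x)‖ ^ 2
        ≤ ∑ f ∈ Finset.univ.filter (fun f => G.rng f = G.rng e),
          ‖adjoint (ρ.Top f) x‖ ^ 2 := by
      rw [sum_adj_normsq, sum_adj_normsq]
      have hpos := (ρ'.tck3 (G.rng e)).2 (ι x)
      rw [reApplyInnerSelf_apply, sub_apply, inner_sub_left, map_sub, sub_nonneg] at hpos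
      refine le_trans hpos (le_of_eq ?_)
      have hSv : (inner ℂ (ρ'.Sop (G.rng e) (ι x)) (ι x) : ℂ) = inner ℂ (ρ.Sop (G.rng e) x) x := by
        have hD := DFunLike.congr_fun (hdilS (G.rng e)) x
        simp only [comp_apply] at hD
        rw [← hD, adjoint_inner_left]
      rw [hSv, ← hCK (G.rng e)]
    have heq := (Finset.sum_eq_sum_iff_of_le hle).mp
      (le_antisymm (Finset.sum_le_sum hle) hsum)
    have hnorm : ‖adjoint (ρ'.Top e) (ι x)‖ = ‖adjoint (ρ.Top e) x‖ :=
      (real_sq_eq (norm_nonneg _) (norm_nonneg _) (heq e he)).symm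
    exact dil_fix ι hι _ _ (hadjdil e) x hnorm
  exact ⟨fun p => reduce_of ι (ρ'.Vop p) (ρ.Vop p) (hV1 p) (hV2 p),
    fun v => reduce_of ι (ρ'.Sop v) (ρ.Sop v) (hS1 v) (fun x => by
      rw [ρ'.S_selfAdjoint, ρ.S_selfAdjoint]; exact hS1 v x),
    fun e => reduce_of ι (ρ'.Top e) (ρ.Top e) (hT1 e) (hT2 e)⟩
end
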